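/- Let 1 < p < 2 with 1/p + 1/p′ = 1 and let z = α + iδ_{p′} with α ∈ ℝ. There exists a constant C_p > 0, depending only on p and q, such that for all F ∈ L^{p′}(Ω,ν), ‖P_z F‖_{L^{p′,∞}(𝔛)} ≤ C_p·‖F‖_{L^{p′}(Ω,ν)}. -/

import Mathlib

open Complex MeasureTheory ENNReal Filter

noncomputable section

/-- A homogeneous tree of degree `q + 1`: a connected acyclic graph in which every
vertex has exactly `q + 1` neighbours, together with a fixed reference vertex `o`. -/
structure HomTree (q : ℕ) where
  X : Type
  G : SimpleGraph X
  connected : G.Connected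
  acyclic : G.IsAcyclic
  regular : ∀ x : X, (G.neighborSet x).ncard = q + 1
  o : X

namespace HomTree

/-- `τ = 2π / log q`. -/
def tau (q : ℕ) : ℝ := 2 * Real.pi / Real.log q

/-- The meromorphic `c`-function. -/
def cfun (q : ℕ) (z : ℂ) : ℂ :=
  ((q : ℂ) ^ ((1 : ℂ) / 2) / ((q : ℂ) + 1)) *
    (((q : ℂ) ^ ((1 : ℂ) / 2 + I * z) - (q : ℂ) ^ (-(1 : ℂ) / 2 - I * z)) /
      ((q : ℂ) ^ (I * z) - (q : ℂ) ^ (-(I * z))))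

/-- The coefficients `B′(n,m,s)`. -/
def Bp (q : ℕ) (s : ℝ) (n m : ℕ) : ℂ :=
  if n = 0 then
    (q : ℂ) ^ (-(I * (s : ℂ) * (m : ℂ))) +
      cfun q (s : ℂ) * ((q : ℂ) ^ (I * (s : ℂ) * (m : ℂ)) - (q : ℂ) ^ (-(I * (s : ℂ) * (m : ℂ))))
  else
    cfun q (s : ℂ) * (q : ℂ) ^ (I * (s : ℂ) * ((n : ℂ) - 1)) *
      ((q : ℂ) ^ (I * (s : ℂ) * ((m : ℂ) - (n : ℂ) + 1)) -
        (q : ℂ) ^ (-(I * (s : ℂ) * ((m : ℂ) - (n : ℂ) + 1))))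

variable {q : ℕ} (T : HomTree q)

/-- Counting measurable structure on the vertices. -/
instance : MeasurableSpace T.X := ⊤

/-- `|x| = d(o, x)`. -/
def nrm (x : T.X) : ℕ := T.G.dist T.o x

open Classical in
/-- The elementary spherical function `φ_z`. -/
def sph (z : ℂ) (x : T.X) : ℂ :=
  if ∃ k : ℤ, z = (k : ℂ) * (tau q : ℂ) then
    ((((q : ℂ) - 1) / ((q : ℂ) + 1)) * (T.nrm x : ℂ) + 1) * (q : ℂ) ^ (-(T.nrm x : ℂ) / 2)
  else if ∃ k : ℤ, z = (tau q : ℂ) / 2 + (k : ℂ) * (tau q : ℂ) then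
    (-1) ^ (T.nrm x) * ((((q : ℂ) - 1) / ((q : ℂ) + 1)) * (T.nrm x : ℂ) + 1) *
      (q : ℂ) ^ (-(T.nrm x : ℂ) / 2)
  else
    cfun q z * (q : ℂ) ^ ((I * z - 1 / 2) * (T.nrm x : ℂ)) +
      cfun q (-z) * (q : ℂ) ^ ((-(I * z) - 1 / 2) * (T.nrm x : ℂ))

/-- A function on the tree is radial if it depends only on `|x|`. -/
def Radial (f : T.X → ℂ) : Prop := ∀ x y : T.X, T.nrm x = T.nrm y → f x = f y

/-- The weak `L^r` quasinorm `sup_{t>0} t · μ(|u| > t)^{1/r}` (w.r.t. the counting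
measure when the underlying measurable space carries `Measure.count`). -/
def weakN {Y : Type} [MeasurableSpace Y] (r : ℝ) (u : Y → ℂ) : ℝ≥0∞ :=
  ⨆ t : ℝ, ENNReal.ofReal t * (Measure.count {y | t < ‖u y‖}) ^ (1 / r)

/-- The Lorentz `L^{r,1}` norm `(1/r)∫₀^∞ u*(t) t^{1/r-1} dt`, written in the equivalent
layer-cake form `∫₀^∞ μ(|u| > s)^{1/r} ds`. -/
def lorN1 {Y : Type} [MeasurableSpace Y] (r : ℝ) (u : Y → ℂ) : ℝ≥0∞ :=
  ∫⁻ s in Set.Ioi (0 : ℝ), (Measure.count {y | s < ‖u y‖}) ^ (1 / r)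

/-- The boundary `Ω`: infinite geodesic rays starting at `o`. -/
structure Boundary where
  seq : ℕ → T.X
  start : seq 0 = T.o
  adj : ∀ n, T.G.Adj (seq n) (seq (n + 1))
  dist_eq : ∀ n, T.G.dist T.o (seq n) = n

/-- The basic boundary set `E(x) = {ω : ω_{|x|} = x}`. -/
def E (x : T.X) : Set T.Boundary := {ω | ω.seq (T.nrm x) = x}

/-- The σ-algebra on `Ω` generated by the sets `E(x)`. -/
instance : MeasurableSpace T.Boundary :=
  MeasurableSpace.generateFrom {S | ∃ x : T.X, S = T.E x}

/-- `|c(x,ω)|`: the distance from `o` of the last vertex on the geodesic from `o` to `x`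
lying on the ray `ω`. -/
def confl (ω : T.Boundary) (x : T.X) : ℕ :=
  Nat.findGreatest (fun n => n + T.G.dist (ω.seq n) x = T.nrm x) (T.nrm x)

/-- The Poisson kernel `p(x,ω) = q^{h_ω(x)} = q^{2|c(x,ω)| - |x|}`. -/
def pker (ω : T.Boundary) (x : T.X) : ℝ :=
  (q : ℝ) ^ ((2 * (T.confl ω x) : ℤ) - (T.nrm x : ℤ))

/-- The Poisson transform `P_z F(x) = ∫_Ω p(x,ω)^{1/2+iz} F(ω) dν(ω)`. -/
def ptrans (ν : Measure T.Boundary) (z : ℂ) (F : T.Boundary → ℂ) (x : T.X) : ℂ :=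
  ∫ ω, ((T.pker ω x : ℂ) ^ ((1 : ℂ) / 2 + I * z)) * F ω ∂ν

/-- The Laplacian `ℒu(x) = (q+1)⁻¹ ∑_{y ∼ x} u(y)`. -/
def lap (u : T.X → ℂ) (x : T.X) : ℂ :=
  (1 / ((q : ℂ) + 1)) * ∑' y : T.G.neighborSet x, u y

/-- `γ(z) = (q^{1/2+iz} + q^{1/2-iz})/(q+1)`. -/
def gam (q : ℕ) (z : ℂ) : ℂ :=
  ((q : ℂ) ^ ((1 : ℂ) / 2 + I * z) + (q : ℂ) ^ ((1 : ℂ) / 2 - I * z)) / ((q : ℂ) + 1)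

/-- The conditional expectation `ℰ_n F(ω) = ν(E(ω_n))⁻¹ ∫_{E(ω_n)} F dν` (real valued). -/
def condE (ν : Measure T.Boundary) (F : T.Boundary → ℝ) (n : ℕ) (ω : T.Boundary) : ℝ :=
  (ν {ω' : T.Boundary | ω'.seq n = ω.seq n}).toReal⁻¹ *
    ∫ ω' in {ω' : T.Boundary | ω'.seq n = ω.seq n}, F ω' ∂ν

/-- The conditional expectation (complex valued). -/
def condEC (ν : Measure T.Boundary) (F : T.Boundary → ℂ) (n : ℕ) (ω : T.Boundary) : ℂ :=
  (((ν {ω' : T.Boundary | ω'.seq n = ω.seq n}).toReal⁻¹ : ℝ) : ℂ) *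
    ∫ ω' in {ω' : T.Boundary | ω'.seq n = ω.seq n}, F ω' ∂ν

/-- The martingale maximal function `ℰF(ω) = sup_n |ℰ_n F(ω)|`, valued in `[0,∞]`. -/
def maximal (ν : Measure T.Boundary) (F : T.Boundary → ℝ) (ω : T.Boundary) : ℝ≥0∞ :=
  ⨆ n : ℕ, ENNReal.ofReal |T.condE ν F n ω|

/-- The martingale difference `Δ_n F = ℰ_n F - ℰ_{n-1} F`, with `ℰ_{-1} = 0`. -/
def deltaC (ν : Measure T.Boundary) (F : T.Boundary → ℂ) (n : ℕ) (ω : T.Boundary) : ℂ :=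
  T.condEC ν F n ω - if n = 0 then 0 else T.condEC ν F (n - 1) ω

/-- `y` and `x` have the same `n`-th vertex on their geodesics from `o`. -/
def sameAt (n : ℕ) (x y : T.X) : Prop :=
  ∃ v : T.X, T.nrm v = n ∧ T.nrm v + T.G.dist v x = T.nrm x ∧ T.nrm v + T.G.dist v y = T.nrm y

/-- `S(n,x)`: `{x}` if `|x| ≤ n`, and `{y : |y| = |x|, y_n = x_n}` otherwise. -/
def sphereSet (n : ℕ) (x : T.X) : Set T.X :=
  if T.nrm x ≤ n then {x} else {y | T.nrm y = T.nrm x ∧ T.sameAt n x y}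

open Classical in
/-- `ε_n u(x) = (#S(n,x))⁻¹ ∑_{y ∈ S(n,x)} u(y)`. -/
def epsOp (n : ℕ) (u : T.X → ℂ) (x : T.X) : ℂ :=
  (((T.sphereSet n x).ncard : ℂ))⁻¹ * ∑' y : T.sphereSet n x, u y

/-- The ball `B(x,r)`. -/
def ball (x : T.X) (r : ℕ) : Set T.X := {y | T.G.dist x y ≤ r}

/-- `ℳu(x) = sup_{r ≥ 1} (#B(x,r))^{-1/2} ∑_{y ∈ B(x,r)} |u(y)|`, valued in `[0,∞]`. -/
def maxOp (u : T.X → ℂ) (x : T.X) : ℝ≥0∞ :=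
  ⨆ r : ℕ+, (Measure.count (T.ball x (r : ℕ))) ^ (-(1 : ℝ) / 2) *
    ∑' y : T.ball x (r : ℕ), ENNReal.ofReal (‖u y‖)

/-- The Helgason–Fourier transform `f̃(z,ω) = ∑_x f(x) p(x,ω)^{1/2+iz}`. -/
def hft (f : T.X → ℂ) (z : ℂ) (ω : T.Boundary) : ℂ :=
  ∑' x : T.X, f x * ((T.pker ω x : ℂ) ^ ((1 : ℂ) / 2 + I * z))

end HomTree

namespace HomTree

variable {q : ℕ} (T : HomTree q)

lemma nrm_o : T.nrm T.o = 0 := by simp [nrm]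

lemma nrm_eq_zero {x : T.X} (h : T.nrm x = 0) : x = T.o := by
  have := (T.connected.dist_eq_zero_iff (u := T.o) (v := x)).mp h
  exact this.symm

/-- Uniqueness of the ancestor at a given level. -/
lemma anc_unique {x w w' : T.X} (h1 : T.nrm w + T.G.dist w x = T.nrm x)
    (h2 : T.nrm w' + T.G.dist w' x = T.nrm x) (hj : T.nrm w' = T.nrm w) : w = w' := by
  classical
  obtain ⟨p1, hp1⟩ := T.connected.exists_walk_length_eq_dist T.o w
  obtain ⟨p2, hp2⟩ := T.connected.exists_walk_length_eq_dist w x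
  obtain ⟨r1, hr1⟩ := T.connected.exists_walk_length_eq_dist T.o w'
  obtain ⟨r2, hr2⟩ := T.connected.exists_walk_length_eq_dist w' x
  have hWlen : (p1.append p2).length = T.G.dist T.o x := by
    rw [SimpleGraph.Walk.length_append, hp1, hp2]; exact h1
  have hW'len : (r1.append r2).length = T.G.dist T.o x := by
    rw [SimpleGraph.Walk.length_append, hr1, hr2]; exact h2
  have hWp : (p1.append p2).IsPath := SimpleGraph.Walk.isPath_of_length_eq_dist _ hWlen
  have hW'p : (r1.append r2).IsPath := SimpleGraph.Walk.isPath_of_length_eq_dist _ hW'len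
  have hpq : (⟨p1.append p2, hWp⟩ : T.G.Path T.o x) = ⟨r1.append r2, hW'p⟩ :=
    SimpleGraph.isAcyclic_iff_path_unique.mp T.acyclic _ _
  have hwalks : p1.append p2 = r1.append r2 := congrArg Subtype.val hpq
  have e1 : (p1.append p2).getVert (T.nrm w) = w := by
    rw [SimpleGraph.Walk.getVert_append]
    simp [hp1, nrm]
  have e2 : (r1.append r2).getVert (T.nrm w') = w' := by
    rw [SimpleGraph.Walk.getVert_append]
    simp [hr1, nrm]
  rw [← e1, hwalks, ← hj, e2]

/-- Distance along a ray. -/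
lemma ray_dist (ω : T.Boundary) {i j : ℕ} (h : i ≤ j) :
    T.G.dist (ω.seq i) (ω.seq j) = j - i := by
  have hle : ∀ k : ℕ, T.G.dist (ω.seq i) (ω.seq (i + k)) ≤ k := by
    intro k
    induction k with
    | zero => simp [SimpleGraph.dist_self]
    | succ m ih =>
      have hadj : T.G.dist (ω.seq (i + m)) (ω.seq (i + m + 1)) = 1 :=
        SimpleGraph.dist_eq_one_iff_adj.mpr (ω.adj (i + m))
      have tri := T.connected.dist_triangle (u := ω.seq i) (v := ω.seq (i + m))
        (w := ω.seq (i + m + 1))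
      rw [hadj] at tri
      have harith : i + (m + 1) = i + m + 1 := by omega
      rw [harith]
      omega
  have h1 : T.G.dist (ω.seq i) (ω.seq j) ≤ j - i := by
    have := hle (j - i)
    rwa [Nat.add_sub_cancel' h] at this
  have h2 : j - i ≤ T.G.dist (ω.seq i) (ω.seq j) := by
    have tri := T.connected.dist_triangle (u := T.o) (v := ω.seq i) (w := ω.seq j)
    rw [ω.dist_eq i, ω.dist_eq j] at tri
    omega
  omega

/-- A boundary point passing through `x` passes through every ancestor of `x`. -/
lemma E_subset {w x : T.X} (h : T.nrm w + T.G.dist w x = T.nrm x) : T.E x ⊆ T.E w := by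
  intro ω hω
  have hωx : ω.seq (T.nrm x) = x := hω
  set j := T.nrm w with hjdef
  have hjn : j ≤ T.nrm x := by omega
  have hseqnrm : T.nrm (ω.seq j) = j := ω.dist_eq j
  have hanc : T.nrm (ω.seq j) + T.G.dist (ω.seq j) x = T.nrm x := by
    rw [hseqnrm]
    have := T.ray_dist ω hjn
    rw [hωx] at this
    omega
  have : w = ω.seq j := T.anc_unique h hanc (by rw [hseqnrm])
  show ω.seq (T.nrm w) = w
  rw [← hjdef, ← this]

end HomTree

namespace HomTree

variable {q : ℕ} (T : HomTree q)

lemma neighborSet_finite (x : T.X) : (T.G.neighborSet x).Finite := by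
  by_contra h
  have : (T.G.neighborSet x).ncard = 0 := Set.Infinite.ncard (by simpa using h)
  rw [T.regular x] at this
  omega

lemma sphere_finite (n : ℕ) : {y : T.X | T.nrm y = n}.Finite := by
  induction n with
  | zero =>
    apply Set.Finite.subset (Set.finite_singleton T.o)
    intro y hy
    exact T.nrm_eq_zero hy
  | succ m ih =>
    have hsub : {y : T.X | T.nrm y = m + 1} ⊆
        ⋃ z ∈ {y : T.X | T.nrm y = m}, T.G.neighborSet z := by
      intro y hy
      have hy' : T.G.dist T.o y = m + 1 := hy
      have hne : T.G.dist y T.o ≠ 0 := by rw [SimpleGraph.dist_comm]; omega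
      obtain ⟨r, hr⟩ := SimpleGraph.exists_walk_of_dist_ne_zero hne
      cases r with
      | nil => simp at hne
      | cons hadj r' =>
        rename_i zz
        have hlen : r'.length = m := by
          have := hr
          simp [SimpleGraph.Walk.length_cons] at this
          rw [SimpleGraph.dist_comm] at this
          omega
        have hz1 : T.G.dist zz T.o ≤ m := by
          have := SimpleGraph.dist_le r'
          omega
        have hz2 : m ≤ T.G.dist zz T.o := by
          have tri := T.connected.dist_triangle (u := T.o) (v := zz) (w := y)
          have hd1 : T.G.dist zz y = 1 := SimpleGraph.dist_eq_one_iff_adj.mpr hadj.symm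
          have hcomm : T.G.dist zz T.o = T.G.dist T.o zz := SimpleGraph.dist_comm
          omega
        have hznrm : T.nrm zz = m := by
          show T.G.dist T.o zz = m
          rw [SimpleGraph.dist_comm]; omega
        refine Set.mem_biUnion hznrm ?_
        exact hadj.symm
    exact Set.Finite.subset (Set.Finite.biUnion ih (fun z _ => T.neighborSet_finite z)) hsub

lemma countable_X : Countable T.X := by
  have : (Set.univ : Set T.X).Countable := by
    have : (Set.univ : Set T.X) = ⋃ n : ℕ, {y : T.X | T.nrm y = n} := by
      ext y; simp only [Set.mem_univ, Set.mem_iUnion, true_iff]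
      exact ⟨T.nrm y, rfl⟩
    rw [this]
    exact Set.countable_iUnion (fun n => (T.sphere_finite n).countable)
  exact Set.countable_univ_iff.mp this

lemma measurableSet_E (w : T.X) : MeasurableSet (T.E w) :=
  MeasurableSpace.measurableSet_generateFrom ⟨w, rfl⟩

lemma seq_eq_iff {k : ℕ} {w : T.X} (ω : T.Boundary) (hw : ω.seq k = w) : T.nrm w = k := by
  rw [← hw]; exact ω.dist_eq k

lemma measurableSet_seq (k : ℕ) (w : T.X) : MeasurableSet {ω : T.Boundary | ω.seq k = w} := by
  by_cases h : T.nrm w = k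
  · have : {ω : T.Boundary | ω.seq k = w} = T.E w := by
      unfold E; rw [h]
    rw [this]; exact T.measurableSet_E w
  · have : {ω : T.Boundary | ω.seq k = w} = ∅ := by
      ext ω; simp only [Set.mem_setOf_eq, Set.mem_empty_iff_false, iff_false]
      intro hc; exact h (T.seq_eq_iff ω hc)
    rw [this]; exact MeasurableSet.empty

lemma mem_E_seq (ω : T.Boundary) (k : ℕ) : ω ∈ T.E (ω.seq k) := by
  show ω.seq (T.nrm (ω.seq k)) = ω.seq k
  rw [show T.nrm (ω.seq k) = k from ω.dist_eq k]

lemma E_o_eq : T.E T.o = Set.univ := by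
  ext ω; simp only [Set.mem_univ, iff_true]
  show ω.seq (T.nrm T.o) = T.o
  rw [T.nrm_o, ω.start]

lemma E_disjoint {w w' : T.X} (h : T.nrm w = T.nrm w') (hne : w ≠ w') :
    Disjoint (T.E w) (T.E w') := by
  rw [Set.disjoint_left]
  intro ω hw hw'
  have h1 : ω.seq (T.nrm w) = w := hw
  have h2 : ω.seq (T.nrm w') = w' := hw'
  rw [← h] at h2
  exact hne (h1.symm.trans h2)

end HomTree

namespace HomTree

/-- `qp q r = q ^ r` in `ℝ≥0∞`. -/
def qp (q : ℕ) (r : ℝ) : ℝ≥0∞ := (q : ℝ≥0∞) ^ r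

section qplemmas

variable {q : ℕ}

lemma qcast_ne_zero (hq : 2 ≤ q) : (q : ℝ≥0∞) ≠ 0 := by
  simp only [ne_eq, Nat.cast_eq_zero]; omega

lemma qcast_ne_top : (q : ℝ≥0∞) ≠ ⊤ := ENNReal.natCast_ne_top q

lemma qcast_one_lt (hq : 2 ≤ q) : (1 : ℝ≥0∞) < (q : ℝ≥0∞) := by
  have : ((1:ℕ) : ℝ≥0∞) < (q : ℝ≥0∞) := by exact_mod_cast (by omega : 1 < q)
  simpa using this

lemma qadd1_ne_zero : ((q : ℝ≥0∞) + 1) ≠ 0 := by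
  intro h
  have : (1:ℝ≥0∞) ≤ (q:ℝ≥0∞) + 1 := le_add_self
  rw [h] at this
  simp at this

lemma qadd1_ne_top : ((q : ℝ≥0∞) + 1) ≠ ⊤ := by
  simp [ENNReal.add_eq_top, qcast_ne_top]

lemma qp_ne_zero (hq : 2 ≤ q) (r : ℝ) : qp q r ≠ 0 := by
  simp only [qp, ne_eq, ENNReal.rpow_eq_zero_iff, not_or, not_and, not_lt]
  constructor
  · intro h; exact absurd h (qcast_ne_zero hq)
  · intro h; exact absurd h qcast_ne_top

lemma qp_ne_top (hq : 2 ≤ q) (r : ℝ) : qp q r ≠ ⊤ := by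
  simp only [qp, ne_eq, ENNReal.rpow_eq_top_iff, not_or, not_and, not_lt]
  constructor
  · intro h; exact absurd h (qcast_ne_zero hq)
  · intro h; exact absurd h qcast_ne_top

lemma qp_add (hq : 2 ≤ q) (r s : ℝ) : qp q (r + s) = qp q r * qp q s :=
  ENNReal.rpow_add r s (qcast_ne_zero hq) qcast_ne_top

lemma qp_zero : qp q 0 = 1 := by simp [qp]

lemma qp_mono (hq : 2 ≤ q) : Monotone (qp q) := fun r s h =>
  ENNReal.rpow_le_rpow_of_exponent_le (le_of_lt (qcast_one_lt hq)) h

lemma qp_lt_one (hq : 2 ≤ q) {r : ℝ} (hr : r < 0) : qp q r < 1 :=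
  ENNReal.rpow_lt_one_of_one_lt_of_neg (qcast_one_lt hq) hr

lemma qp_rpow (r s : ℝ) : (qp q r) ^ s = qp q (r * s) :=
  (ENNReal.rpow_mul _ r s).symm

lemma qp_natCast (n : ℕ) : qp q (n : ℝ) = (q : ℝ≥0∞) ^ n := by
  simp [qp, ENNReal.rpow_natCast]

lemma qp_neg_natCast (n : ℕ) : qp q (-(n : ℝ)) = ((q : ℝ≥0∞) ^ n)⁻¹ := by
  rw [← qp_natCast (q := q), qp, qp, ← ENNReal.rpow_neg]

lemma qp_ofReal (hq : 2 ≤ q) (r : ℝ) : ENNReal.ofReal ((q : ℝ) ^ r) = qp q r := by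
  have hqpos : (0:ℝ) < (q:ℝ) := by
    have : (0:ℕ) < q := by omega
    exact_mod_cast this
  rw [← ENNReal.ofReal_rpow_of_pos hqpos, ENNReal.ofReal_natCast]
  rfl

end qplemmas

section nubounds

variable {q : ℕ} (T : HomTree q) {ν : Measure T.Boundary} [IsProbabilityMeasure ν]

lemma nu_E_le (hq : 2 ≤ q)
    (hν : ∀ x : T.X, x ≠ T.o →
      ν (T.E x) = (q : ℝ≥0∞) / (((q : ℝ≥0∞) + 1) * (q : ℝ≥0∞) ^ T.nrm x))
    (w : T.X) : ν (T.E w) ≤ qp q (-(T.nrm w : ℝ)) := by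
  by_cases hw : w = T.o
  · subst hw
    rw [T.E_o_eq, T.nrm_o]
    simp only [Nat.cast_zero, neg_zero, qp_zero, measure_univ, le_refl]
  · have key : (q:ℝ≥0∞) / (((q:ℝ≥0∞)+1) * (q:ℝ≥0∞) ^ (T.nrm w))
        = ((q:ℝ≥0∞)/((q:ℝ≥0∞)+1)) * ((q:ℝ≥0∞) ^ (T.nrm w))⁻¹ := by
      rw [ENNReal.div_eq_inv_mul, ENNReal.mul_inv (Or.inl qadd1_ne_zero) (Or.inl qadd1_ne_top),
        ENNReal.div_eq_inv_mul]
      ring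
    rw [hν w hw, qp_neg_natCast, key]
    nth_rewrite 2 [← one_mul (((q:ℝ≥0∞) ^ (T.nrm w))⁻¹)]
    gcongr
    exact ENNReal.div_le_of_le_mul (by rw [one_mul]; exact le_self_add)

lemma nu_E_ge (hq : 2 ≤ q)
    (hν : ∀ x : T.X, x ≠ T.o →
      ν (T.E x) = (q : ℝ≥0∞) / (((q : ℝ≥0∞) + 1) * (q : ℝ≥0∞) ^ T.nrm x))
    (w : T.X) : qp q (-(T.nrm w : ℝ)) / 2 ≤ ν (T.E w) := by
  by_cases hw : w = T.o
  · subst hw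
    rw [T.E_o_eq, T.nrm_o]
    simp only [Nat.cast_zero, neg_zero, qp_zero, measure_univ]
    exact ENNReal.half_le_self
  · have key : (q:ℝ≥0∞) / (((q:ℝ≥0∞)+1) * (q:ℝ≥0∞) ^ (T.nrm w))
        = ((q:ℝ≥0∞)/((q:ℝ≥0∞)+1)) * ((q:ℝ≥0∞) ^ (T.nrm w))⁻¹ := by
      rw [ENNReal.div_eq_inv_mul, ENNReal.mul_inv (Or.inl qadd1_ne_zero) (Or.inl qadd1_ne_top),
        ENNReal.div_eq_inv_mul]
      ring
    rw [hν w hw, qp_neg_natCast, key, ENNReal.div_eq_inv_mul, mul_comm (2:ℝ≥0∞)⁻¹ _,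
      mul_comm ((q:ℝ≥0∞)/((q:ℝ≥0∞)+1)) _]
    gcongr
    -- ⊢ 2⁻¹ ≤ (q:ℝ≥0∞)/((q:ℝ≥0∞)+1)
    rw [ENNReal.le_div_iff_mul_le (Or.inl qadd1_ne_zero) (Or.inl qadd1_ne_top)]
    have h2 : ((q:ℝ≥0∞) + 1) ≤ 2 * q := by
      have : (1:ℝ≥0∞) ≤ q := le_of_lt (qcast_one_lt hq)
      calc (q:ℝ≥0∞) + 1 ≤ q + q := by gcongr
      _ = 2 * q := (two_mul _).symm
    calc (2:ℝ≥0∞)⁻¹ * ((q:ℝ≥0∞)+1) ≤ 2⁻¹ * (2 * q) := by gcongr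
    _ = q := by rw [← mul_assoc, ENNReal.inv_mul_cancel (by norm_num) (by norm_num), one_mul]

end nubounds

end HomTree

namespace HomTree

variable {q : ℕ} (T : HomTree q)

lemma confl_le (ω : T.Boundary) (x : T.X) : T.confl ω x ≤ T.nrm x :=
  Nat.findGreatest_le _

lemma confl_spec (ω : T.Boundary) (x : T.X) :
    T.confl ω x + T.G.dist (ω.seq (T.confl ω x)) x = T.nrm x := by
  have h0 : 0 + T.G.dist (ω.seq 0) x = T.nrm x := by
    rw [ω.start, Nat.zero_add]; rfl
  exact Nat.findGreatest_spec (P := fun n => n + T.G.dist (ω.seq n) x = T.nrm x)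
    (m := 0) (n := T.nrm x) (Nat.zero_le _) h0

/-- The set of boundary points whose level-`j` vertex is an ancestor of `x`. -/
def Uset (j : ℕ) (x : T.X) : Set T.Boundary :=
  {ω | j + T.G.dist (ω.seq j) x = T.nrm x}

lemma measurableSet_Uset (j : ℕ) (x : T.X) : MeasurableSet (T.Uset j x) := by
  haveI := T.countable_X
  have : T.Uset j x = ⋃ w : T.X, ⋃ (_ : j + T.G.dist w x = T.nrm x),
      {ω : T.Boundary | ω.seq j = w} := by
    ext ω
    simp only [Uset, Set.mem_setOf_eq, Set.mem_iUnion]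
    constructor
    · intro h; exact ⟨ω.seq j, h, rfl⟩
    · rintro ⟨w, hw, hs⟩; rw [hs]; exact hw
  rw [this]
  exact MeasurableSet.iUnion fun w => MeasurableSet.iUnion fun _ => T.measurableSet_seq j w

lemma Uset_subset_E {j : ℕ} {w x : T.X} (hw : T.nrm w = j)
    (hanc : T.nrm w + T.G.dist w x = T.nrm x) : T.Uset j x ⊆ T.E w := by
  intro ω hω
  have hseq : T.nrm (ω.seq j) = j := ω.dist_eq j
  have h2 : T.nrm (ω.seq j) + T.G.dist (ω.seq j) x = T.nrm x := by rw [hseq]; exact hω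
  have : w = ω.seq j := T.anc_unique hanc h2 (by rw [hseq, hw])
  show ω.seq (T.nrm w) = w
  rw [hw, ← this]

lemma Uset_empty_of_no_anc {j : ℕ} {x : T.X}
    (h : ∀ w : T.X, ¬(T.nrm w = j ∧ T.nrm w + T.G.dist w x = T.nrm x)) :
    T.Uset j x = ∅ := by
  ext ω
  simp only [Uset, Set.mem_setOf_eq, Set.mem_empty_iff_false, iff_false]
  intro hω
  have hseq : T.nrm (ω.seq j) = j := ω.dist_eq j
  exact h (ω.seq j) ⟨hseq, by rw [hseq]; exact hω⟩

lemma pker_eq (hq : 2 ≤ q) (ω : T.Boundary) (x : T.X) :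
    T.pker ω x = (q : ℝ) ^ ((2 * (T.confl ω x) : ℤ) - (T.nrm x : ℤ)) := rfl

lemma pker_pos (hq : 2 ≤ q) (ω : T.Boundary) (x : T.X) : 0 < T.pker ω x := by
  rw [T.pker_eq hq]
  have : (0:ℝ) < (q:ℝ) := by exact_mod_cast (by omega : 0 < q)
  positivity

/-- The `ℝ≥0∞`-valued norm of the Poisson kernel power. -/
lemma kernel_enorm (hq : 2 ≤ q) (z : ℂ) (ω : T.Boundary) (x : T.X) :
    (‖((T.pker ω x : ℂ)) ^ ((1:ℂ)/2 + I*z)‖₊ : ℝ≥0∞)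
      = qp q ((2*(T.confl ω x : ℝ) - (T.nrm x : ℝ)) * ((1:ℂ)/2 + I*z).re) := by
  have hqpos : (0:ℝ) < (q:ℝ) := by exact_mod_cast (by omega : 0 < q)
  have habs : ‖(((T.pker ω x : ℂ)) ^ ((1:ℂ)/2 + I*z))‖
      = (T.pker ω x) ^ (((1:ℂ)/2 + I*z).re) :=
    Complex.norm_cpow_eq_rpow_re_of_pos (T.pker_pos hq ω x) _
  have hnorm : (‖((T.pker ω x : ℂ)) ^ ((1:ℂ)/2 + I*z)‖₊ : ℝ≥0∞)
      = ENNReal.ofReal ((T.pker ω x) ^ (((1:ℂ)/2 + I*z).re)) := by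
    rw [← habs]; exact (ofReal_norm _).symm
  rw [hnorm, T.pker_eq hq]
  rw [← Real.rpow_intCast (q:ℝ) ((2 * (T.confl ω x) : ℤ) - (T.nrm x : ℤ))]
  rw [← Real.rpow_mul (le_of_lt hqpos)]
  rw [qp_ofReal hq]
  congr 1
  push_cast
  ring

end HomTree

namespace HomTree

variable {q : ℕ} (T : HomTree q)

lemma ptrans_enorm_le (hq : 2 ≤ q) (ν : Measure T.Boundary) (z : ℂ) (F : T.Boundary → ℂ)
    (hF : AEMeasurable (fun ω => (‖F ω‖₊ : ℝ≥0∞)) ν) (x : T.X) :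
    (‖T.ptrans ν z F x‖₊ : ℝ≥0∞) ≤
      ∑ j ∈ Finset.range (T.nrm x + 1),
        qp q ((2*(j:ℝ) - (T.nrm x : ℝ)) * ((1:ℂ)/2 + I*z).re) *
          ∫⁻ ω in T.Uset j x, (‖F ω‖₊ : ℝ≥0∞) ∂ν := by
  set a := ((1:ℂ)/2 + I*z).re with ha
  have step1 : (‖T.ptrans ν z F x‖₊ : ℝ≥0∞)
      ≤ ∫⁻ ω, (‖((T.pker ω x : ℂ)) ^ ((1:ℂ)/2 + I*z) * F ω‖₊ : ℝ≥0∞) ∂ν :=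
    enorm_integral_le_lintegral_enorm _
  have step2 : ∀ ω, (‖((T.pker ω x : ℂ)) ^ ((1:ℂ)/2 + I*z) * F ω‖₊ : ℝ≥0∞)
      ≤ ∑ j ∈ Finset.range (T.nrm x + 1),
          Set.indicator (T.Uset j x)
            (fun ω' => qp q ((2*(j:ℝ) - (T.nrm x : ℝ)) * a) * (‖F ω'‖₊ : ℝ≥0∞)) ω := by
    intro ω
    have hkey : (‖((T.pker ω x : ℂ)) ^ ((1:ℂ)/2 + I*z) * F ω‖₊ : ℝ≥0∞)
        = qp q ((2*(T.confl ω x : ℝ) - (T.nrm x : ℝ)) * a) * (‖F ω‖₊ : ℝ≥0∞) := by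
      rw [nnnorm_mul, ENNReal.coe_mul, T.kernel_enorm hq z ω x]
    rw [hkey]
    have h1 : T.confl ω x ∈ Finset.range (T.nrm x + 1) := by
      simp only [Finset.mem_range, Nat.lt_succ_iff]; exact T.confl_le ω x
    have h2 : ω ∈ T.Uset (T.confl ω x) x := T.confl_spec ω x
    refine le_trans ?_ (Finset.single_le_sum
      (f := fun j => Set.indicator (T.Uset j x)
        (fun ω' => qp q ((2*(j:ℝ) - (T.nrm x : ℝ)) * a) * (‖F ω'‖₊ : ℝ≥0∞)) ω)
      (fun j _ => zero_le) h1)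
    simp only [Set.indicator_of_mem h2]
    exact le_rfl
  calc (‖T.ptrans ν z F x‖₊ : ℝ≥0∞)
      ≤ ∫⁻ ω, (‖((T.pker ω x : ℂ)) ^ ((1:ℂ)/2 + I*z) * F ω‖₊ : ℝ≥0∞) ∂ν := step1
    _ ≤ ∫⁻ ω, (∑ j ∈ Finset.range (T.nrm x + 1),
          Set.indicator (T.Uset j x)
            (fun ω' => qp q ((2*(j:ℝ) - (T.nrm x : ℝ)) * a) * (‖F ω'‖₊ : ℝ≥0∞)) ω) ∂ν :=
        lintegral_mono step2
    _ = ∑ j ∈ Finset.range (T.nrm x + 1), ∫⁻ ω, Set.indicator (T.Uset j x)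
            (fun ω' => qp q ((2*(j:ℝ) - (T.nrm x : ℝ)) * a) * (‖F ω'‖₊ : ℝ≥0∞)) ω ∂ν := by
        refine lintegral_finset_sum' _ (fun j _ => ?_)
        exact (AEMeasurable.indicator (hF.const_mul _) (T.measurableSet_Uset j x))
    _ = ∑ j ∈ Finset.range (T.nrm x + 1),
        qp q ((2*(j:ℝ) - (T.nrm x : ℝ)) * a) * ∫⁻ ω in T.Uset j x, (‖F ω‖₊ : ℝ≥0∞) ∂ν := by
        refine Finset.sum_congr rfl (fun j _ => ?_)
        rw [lintegral_indicator (T.measurableSet_Uset j x),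
          lintegral_const_mul'' _ hF.restrict]

/-- If no ancestor of `x` is bad at threshold `lam`, then the Poisson transform at `x`
is controlled. -/
lemma enorm_le_of_no_bad (hq : 2 ≤ q) (ν : Measure T.Boundary) [IsProbabilityMeasure ν]
    (hν : ∀ y : T.X, y ≠ T.o →
      ν (T.E y) = (q : ℝ≥0∞) / (((q : ℝ≥0∞) + 1) * (q : ℝ≥0∞) ^ T.nrm y))
    (z : ℂ) (a : ℝ) (hrea : ((1:ℂ)/2 + I*z).re = a) (hahalf : 1/2 < a) (ha1 : a < 1)
    (F : T.Boundary → ℂ) (hF : AEMeasurable (fun ω => (‖F ω‖₊ : ℝ≥0∞)) ν)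
    (x : T.X) (lam : ℝ≥0∞)
    (hnb : ∀ w : T.X, T.nrm w + T.G.dist w x = T.nrm x →
      ∫⁻ ω in T.E w, (‖F ω‖₊ : ℝ≥0∞) ∂ν ≤ lam * ν (T.E w)) :
    (‖T.ptrans ν z F x‖₊ : ℝ≥0∞) ≤
      lam * (1 - qp q (-(2*a-1)))⁻¹ * qp q (-(T.nrm x : ℝ)*(1-a)) := by
  set n := T.nrm x with hn
  have hδ : (0:ℝ) < 2*a - 1 := by linarith
  -- bound each U-integral
  have hU : ∀ j, j ≤ n → ∫⁻ ω in T.Uset j x, (‖F ω‖₊ : ℝ≥0∞) ∂ν ≤ lam * qp q (-(j:ℝ)) := by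
    intro j hj
    by_cases hex : ∃ w : T.X, T.nrm w = j ∧ T.nrm w + T.G.dist w x = T.nrm x
    · obtain ⟨w, hw1, hw2⟩ := hex
      calc ∫⁻ ω in T.Uset j x, (‖F ω‖₊ : ℝ≥0∞) ∂ν
          ≤ ∫⁻ ω in T.E w, (‖F ω‖₊ : ℝ≥0∞) ∂ν :=
            lintegral_mono_set (T.Uset_subset_E hw1 hw2)
        _ ≤ lam * ν (T.E w) := hnb w hw2
        _ ≤ lam * qp q (-(j:ℝ)) := by
            rw [← hw1]
            exact mul_le_mul_right (T.nu_E_le hq hν w) lam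
    · have : T.Uset j x = ∅ := T.Uset_empty_of_no_anc (by
        intro w hw; exact hex ⟨w, hw.1, hw.2⟩)
      rw [this]
      simp
  calc (‖T.ptrans ν z F x‖₊ : ℝ≥0∞)
      ≤ ∑ j ∈ Finset.range (n + 1),
        qp q ((2*(j:ℝ) - (n : ℝ)) * a) * ∫⁻ ω in T.Uset j x, (‖F ω‖₊ : ℝ≥0∞) ∂ν := by
        have h := T.ptrans_enorm_le hq ν z F hF x
        rw [hrea] at h
        exact h
    _ ≤ ∑ j ∈ Finset.range (n + 1),
        qp q ((2*(j:ℝ) - (n : ℝ)) * a) * (lam * qp q (-(j:ℝ))) := by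
        refine Finset.sum_le_sum (fun j hj => ?_)
        exact mul_le_mul_right (hU j (by simpa [Nat.lt_succ_iff] using hj)) _
    _ = lam * ∑ j ∈ Finset.range (n + 1),
        qp q (-(n:ℝ)*(1-a)) * qp q (-((n - j : ℕ) : ℝ)*(2*a-1)) := by
        rw [Finset.mul_sum]
        refine Finset.sum_congr rfl (fun j hj => ?_)
        have hjn : j ≤ n := by simpa [Nat.lt_succ_iff] using hj
        have hcast : ((n - j : ℕ) : ℝ) = (n:ℝ) - (j:ℝ) := by
          rw [Nat.cast_sub hjn]
        rw [hcast]
        calc qp q ((2 * (j:ℝ) - (n:ℝ)) * a) * (lam * qp q (-(j:ℝ)))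
            = lam * (qp q ((2 * (j:ℝ) - (n:ℝ)) * a) * qp q (-(j:ℝ))) := by ring
          _ = lam * qp q ((2 * (j:ℝ) - (n:ℝ)) * a + -(j:ℝ)) := by rw [← qp_add hq]
          _ = lam * (qp q (-(n:ℝ)*(1-a)) * qp q (-((n:ℝ) - (j:ℝ))*(2*a-1))) := by
              rw [← qp_add hq]
              congr 1
              ring
    _ = lam * qp q (-(n:ℝ)*(1-a)) *
        ∑ j ∈ Finset.range (n + 1), qp q (-((n - j : ℕ) : ℝ)*(2*a-1)) := by
        rw [← Finset.mul_sum, ← mul_assoc]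
    _ ≤ lam * qp q (-(n:ℝ)*(1-a)) * (1 - qp q (-(2*a-1)))⁻¹ := by
        refine mul_le_mul_right ?_ _
        have hreflect : ∑ j ∈ Finset.range (n + 1), qp q (-((n - j : ℕ) : ℝ)*(2*a-1))
            = ∑ m ∈ Finset.range (n + 1), qp q (-(m : ℝ)*(2*a-1)) := by
          have h := Finset.sum_range_reflect (fun m => qp q (-(m : ℝ)*(2*a-1))) (n+1)
          simp only [Nat.add_sub_cancel] at h
          exact h
        rw [hreflect]
        have hgeom : ∀ m : ℕ, qp q (-(m : ℝ)*(2*a-1)) = (qp q (-(2*a-1)))^m := by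
          intro m
          rw [← ENNReal.rpow_natCast (qp q (-(2*a-1))) m, qp_rpow]
          congr 1
          ring
        calc ∑ m ∈ Finset.range (n + 1), qp q (-(m : ℝ)*(2*a-1))
            ≤ ∑' m : ℕ, qp q (-(m : ℝ)*(2*a-1)) := ENNReal.sum_le_tsum _
          _ = ∑' m : ℕ, (qp q (-(2*a-1)))^m := by
              exact tsum_congr hgeom
          _ = (1 - qp q (-(2*a-1)))⁻¹ := ENNReal.tsum_geometric _
    _ = lam * (1 - qp q (-(2*a-1)))⁻¹ * qp q (-(n : ℝ)*(1-a)) := by ring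

end HomTree

namespace HomTree

variable {q : ℕ} (T : HomTree q)

/-- Vertices where the averaged integral exceeds threshold `s`. -/
def badV (ν : Measure T.Boundary) (g : T.Boundary → ℝ≥0∞) (s : ℝ≥0∞) : Set T.X :=
  {w | s * ν (T.E w) < ∫⁻ ω in T.E w, g ω ∂ν}

/-- The exceptional boundary set at threshold `s`. -/
def OmS (ν : Measure T.Boundary) (g : T.Boundary → ℝ≥0∞) (s : ℝ≥0∞) : Set T.Boundary :=
  ⋃ w ∈ T.badV ν g s, T.E w

lemma measurableSet_OmS (ν : Measure T.Boundary) (g : T.Boundary → ℝ≥0∞) (s : ℝ≥0∞) :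
    MeasurableSet (T.OmS ν g s) := by
  haveI := T.countable_X
  exact MeasurableSet.biUnion (Set.to_countable _) (fun w _ => T.measurableSet_E w)

/-- Minimal bad vertices. -/
def minBad (ν : Measure T.Boundary) (g : T.Boundary → ℝ≥0∞) (s : ℝ≥0∞) : Set T.X :=
  {w ∈ T.badV ν g s | ∀ w' : T.X, T.nrm w' < T.nrm w →
    T.nrm w' + T.G.dist w' w = T.nrm w → w' ∉ T.badV ν g s}

lemma OmS_subset_minBad (ν : Measure T.Boundary) (g : T.Boundary → ℝ≥0∞) (s : ℝ≥0∞) :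
    T.OmS ν g s ⊆ ⋃ w ∈ T.minBad ν g s, T.E w := by
  intro ω hω
  obtain ⟨w₀, hw₀bad, hw₀mem⟩ := by
    simpa only [OmS, Set.mem_iUnion, exists_prop] using hω
  classical
  have hL : ∃ k : ℕ, ω.seq k ∈ T.badV ν g s := by
    refine ⟨T.nrm w₀, ?_⟩
    have : ω.seq (T.nrm w₀) = w₀ := hw₀mem
    rw [this]; exact hw₀bad
  let j := Nat.find hL
  have hjbad : ω.seq j ∈ T.badV ν g s := Nat.find_spec hL
  have hjmin : ∀ k, k < j → ω.seq k ∉ T.badV ν g s := fun k hk => Nat.find_min hL hk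
  refine Set.mem_biUnion ?_ (T.mem_E_seq ω j)
  refine ⟨hjbad, ?_⟩
  intro w' hlt hanc hbad'
  have hnrmj : T.nrm (ω.seq j) = j := ω.dist_eq j
  -- w' is an ancestor of ω.seq j, so w' = ω.seq (T.nrm w')
  have hsub : T.E (ω.seq j) ⊆ T.E w' := T.E_subset hanc
  have hω' : ω ∈ T.E w' := hsub (T.mem_E_seq ω j)
  have hw'eq : ω.seq (T.nrm w') = w' := hω'
  have : T.nrm w' < j := by rw [← hnrmj]; exact hlt
  exact hjmin (T.nrm w') this (by rw [hw'eq]; exact hbad')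

lemma minBad_disjoint (ν : Measure T.Boundary) (g : T.Boundary → ℝ≥0∞) (s : ℝ≥0∞) :
    (T.minBad ν g s).PairwiseDisjoint T.E := by
  intro w hw w' hw' hne
  rw [Function.onFun, Set.disjoint_left]
  intro ω hmem hmem'
  have h1 : ω.seq (T.nrm w) = w := hmem
  have h2 : ω.seq (T.nrm w') = w' := hmem'
  rcases lt_trichotomy (T.nrm w) (T.nrm w') with hlt | heq | hgt
  · -- w is a bad ancestor of w', contradicting minimality of w'
    have hanc : T.nrm w + T.G.dist w w' = T.nrm w' := by
      have := T.ray_dist ω (le_of_lt hlt)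
      rw [h1, h2] at this
      omega
    exact hw'.2 w hlt hanc hw.1
  · exact hne (by rw [← h1, ← h2, heq])
  · have hanc : T.nrm w' + T.G.dist w' w = T.nrm w := by
      have := T.ray_dist ω (le_of_lt hgt)
      rw [h1, h2] at this
      omega
    exact hw.2 w' hgt hanc hw'.1

/-- The maximal-function weak estimate with truncation. -/
lemma nu_OmS_le (ν : Measure T.Boundary) [IsProbabilityMeasure ν]
    (g : T.Boundary → ℝ≥0∞) (hg : AEMeasurable g ν) (s : ℝ≥0∞) (hs0 : s ≠ 0) (hst : s ≠ ⊤) :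
    s * ν (T.OmS ν g s) ≤ 2 * ∫⁻ ω, (if s < 2 * g ω then g ω else 0) ∂ν := by
  haveI := T.countable_X
  set big : T.Boundary → ℝ≥0∞ := fun ω => if s < 2 * g ω then g ω else 0 with hbig
  have hbigmeas : AEMeasurable big ν := by
    have hφ : Measurable (fun y : ℝ≥0∞ => if s < 2 * y then y else 0) := by
      apply Measurable.ite _ measurable_id measurable_const
      have : Measurable (fun y : ℝ≥0∞ => 2 * y) := measurable_const.mul measurable_id
      exact this measurableSet_Ioi
    exact hφ.comp_aemeasurable hg
  -- pointwise bound g ≤ s/2 + big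
  have hpt : ∀ ω, g ω ≤ s/2 + big ω := by
    intro ω
    by_cases h : s < 2 * g ω
    · simp only [hbig, if_pos h]
      exact le_add_self
    · simp only [hbig, if_neg h]
      push_neg at h
      rw [add_zero]
      rw [ENNReal.le_div_iff_mul_le (Or.inl (by norm_num)) (Or.inl (by norm_num))]
      rw [mul_comm]
      exact h
  -- for each minimal bad w : s * ν (E w) ≤ 2 * ∫_{E w} big
  have hperw : ∀ w ∈ T.minBad ν g s,
      s * ν (T.E w) ≤ 2 * ∫⁻ ω in T.E w, big ω ∂ν := by
    intro w hw
    have hbad : s * ν (T.E w) < ∫⁻ ω in T.E w, g ω ∂ν := hw.1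
    have hsplit : ∫⁻ ω in T.E w, g ω ∂ν ≤ s/2 * ν (T.E w) + ∫⁻ ω in T.E w, big ω ∂ν := by
      calc ∫⁻ ω in T.E w, g ω ∂ν ≤ ∫⁻ ω in T.E w, (s/2 + big ω) ∂ν :=
            lintegral_mono hpt
        _ = s/2 * ν (T.E w) + ∫⁻ ω in T.E w, big ω ∂ν := by
            rw [lintegral_add_left' aemeasurable_const]
            congr 1
            rw [setLIntegral_const]
    have hfin : s/2 * ν (T.E w) ≠ ⊤ :=
      ENNReal.mul_ne_top (by simp [ENNReal.div_eq_top, hst]) (measure_ne_top ν _)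
    have hkey : s/2 * ν (T.E w) ≤ ∫⁻ ω in T.E w, big ω ∂ν := by
      have h2 : s * ν (T.E w) ≤ s/2 * ν (T.E w) + ∫⁻ ω in T.E w, big ω ∂ν :=
        le_trans (le_of_lt hbad) hsplit
      have hsum : s * ν (T.E w) = s/2 * ν (T.E w) + s/2 * ν (T.E w) := by
        rw [← add_mul, ENNReal.add_halves]
      rw [hsum] at h2
      exact (ENNReal.add_le_add_iff_left hfin).mp h2
    calc s * ν (T.E w) = 2 * (s/2 * ν (T.E w)) := by
          rw [← mul_assoc, ENNReal.mul_div_cancel (by norm_num) (by norm_num)]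
      _ ≤ 2 * ∫⁻ ω in T.E w, big ω ∂ν := mul_le_mul_right hkey 2
  -- put together
  have hcnt : (T.minBad ν g s).Countable := Set.to_countable _
  haveI := hcnt.to_subtype
  calc s * ν (T.OmS ν g s)
      ≤ s * ν (⋃ w ∈ T.minBad ν g s, T.E w) :=
        mul_le_mul_right (measure_mono (T.OmS_subset_minBad ν g s)) s
    _ ≤ s * ∑' w : (T.minBad ν g s), ν (T.E (w : T.X)) := by
        refine mul_le_mul_right ?_ s
        rw [Set.biUnion_eq_iUnion]
        exact measure_iUnion_le _
    _ = ∑' w : (T.minBad ν g s), s * ν (T.E (w : T.X)) := ENNReal.tsum_mul_left.symm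
    _ ≤ ∑' w : (T.minBad ν g s), 2 * ∫⁻ ω in T.E (w : T.X), big ω ∂ν :=
        ENNReal.tsum_le_tsum (fun w => hperw w w.2)
    _ = 2 * ∑' w : (T.minBad ν g s), ∫⁻ ω in T.E (w : T.X), big ω ∂ν :=
        ENNReal.tsum_mul_left
    _ = 2 * ∫⁻ ω in ⋃ w : (T.minBad ν g s), T.E (w : T.X), big ω ∂ν := by
        congr 1
        rw [lintegral_iUnion (fun w => T.measurableSet_E _) ?_]
        · intro w w' hne
          have := T.minBad_disjoint ν g s w.2 w'.2 (by
            intro h; exact hne (Subtype.ext h))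
          exact this
    _ ≤ 2 * ∫⁻ ω, big ω ∂ν := by
        refine mul_le_mul_right ?_ 2
        exact lintegral_mono' Measure.restrict_le_self le_rfl

/-- Counting level-`n` vertices whose boundary sets sit inside a given set. -/
lemma count_level_le (hq : 2 ≤ q) (ν : Measure T.Boundary) [IsProbabilityMeasure ν]
    (hν : ∀ y : T.X, y ≠ T.o →
      ν (T.E y) = (q : ℝ≥0∞) / (((q : ℝ≥0∞) + 1) * (q : ℝ≥0∞) ^ T.nrm y))
    (n : ℕ) (S : Set T.X) (hS : ∀ x ∈ S, T.nrm x = n)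
    (W : Set T.Boundary) (hW : ∀ x ∈ S, T.E x ⊆ W) :
    Measure.count S ≤ 2 * qp q (n : ℝ) * ν W := by
  haveI := T.countable_X
  haveI := (Set.to_countable S).to_subtype
  have hcount : Measure.count S = ∑' _ : S, (1 : ℝ≥0∞) :=
    by rw [Measure.count_apply MeasurableSpace.measurableSet_top, ENNReal.tsum_one]; rfl
  have hone : ∀ x : S, (1:ℝ≥0∞) ≤ 2 * qp q (n : ℝ) * ν (T.E (x : T.X)) := by
    intro x
    have hge := T.nu_E_ge hq hν (x : T.X)
    rw [hS (x : T.X) x.2] at hge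
    calc (1:ℝ≥0∞) = 2 * qp q (n:ℝ) * (qp q (-(n:ℝ)) / 2) := by
          rw [ENNReal.div_eq_inv_mul]
          rw [show (2:ℝ≥0∞) * qp q (n:ℝ) * (2⁻¹ * qp q (-(n:ℝ)))
            = (2 * 2⁻¹) * (qp q (n:ℝ) * qp q (-(n:ℝ))) by ring]
          rw [ENNReal.mul_inv_cancel (by norm_num) (by norm_num), ← qp_add hq]
          simp [qp_zero]
      _ ≤ 2 * qp q (n:ℝ) * ν (T.E (x : T.X)) := mul_le_mul_right hge _
  have hdisj : Pairwise (Function.onFun Disjoint (fun x : S => T.E (x : T.X))) := by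
    intro x y hne
    exact T.E_disjoint (by rw [hS _ x.2, hS _ y.2]) (fun h => hne (Subtype.ext h))
  calc Measure.count S = ∑' _ : S, (1 : ℝ≥0∞) := hcount
    _ ≤ ∑' x : S, 2 * qp q (n : ℝ) * ν (T.E (x : T.X)) := ENNReal.tsum_le_tsum hone
    _ = 2 * qp q (n : ℝ) * ∑' x : S, ν (T.E (x : T.X)) := ENNReal.tsum_mul_left
    _ = 2 * qp q (n : ℝ) * ν (⋃ x : S, T.E (x : T.X)) := by
        rw [measure_iUnion hdisj (fun x => T.measurableSet_E _)]
    _ ≤ 2 * qp q (n : ℝ) * ν W := by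
        refine mul_le_mul_right (measure_mono ?_) _
        exact Set.iUnion_subset (fun x => hW (x : T.X) x.2)

end HomTree

namespace HomTree

lemma qp_neg (q : ℕ) (r : ℝ) : qp q (-r) = (qp q r)⁻¹ := by
  rw [qp, qp, ENNReal.rpow_neg]

lemma qp_pow_nat {q : ℕ} (r : ℝ) (n : ℕ) : (qp q r)^n = qp q ((n:ℝ)*r) := by
  rw [← ENNReal.rpow_natCast (qp q r) n, qp_rpow]
  congr 1
  ring

lemma geom_tail {q : ℕ} (hq : 2 ≤ q) {a b : ℝ} (ha : 0 < a) (hb : 0 < b)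
    (Y : ℝ≥0∞) (hY : Y ≠ ⊤) :
    ∑' n : ℕ, (if qp q ((n:ℝ)*b) < Y then qp q ((n:ℝ)*a) else 0)
      ≤ (1 - qp q (-a))⁻¹ * Y ^ (a/b) := by
  classical
  set S : Set ℕ := {n | qp q ((n:ℝ)*b) < Y} with hSdef
  by_cases hne : S.Nonempty
  · -- S is bounded above
    have hr : qp q (-b) < 1 := qp_lt_one hq (by linarith)
    have hYinv : (0:ℝ≥0∞) < Y⁻¹ := ENNReal.inv_pos.mpr hY
    have htend := ENNReal.tendsto_pow_atTop_nhds_zero_of_lt_one hr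
    obtain ⟨N, hN⟩ := (htend.eventually_lt_const hYinv).exists
    have hNY : Y < qp q ((N:ℝ)*b) := by
      rw [qp_pow_nat] at hN
      rw [show ((N:ℝ)*(-b)) = -((N:ℝ)*b) by ring, qp_neg] at hN
      exact ENNReal.inv_lt_inv.mp hN
    have hbdd : BddAbove S := by
      refine ⟨N, fun n hn => ?_⟩
      by_contra hcon
      push_neg at hcon
      have h1 : qp q ((N:ℝ)*b) ≤ qp q ((n:ℝ)*b) := by
        apply qp_mono hq
        have : (N:ℝ) ≤ (n:ℝ) := by exact_mod_cast le_of_lt hcon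
        nlinarith
      have h2 : qp q ((n:ℝ)*b) < Y := hn
      exact absurd (lt_trans hNY (lt_of_le_of_lt h1 h2)) (lt_irrefl _)
    set m := sSup S with hm
    have hmS : m ∈ S := Nat.sSup_mem hne hbdd
    have hlem : ∀ n ∈ S, n ≤ m := fun n hn => le_csSup hbdd hn
    have hzero : ∀ n ∉ Finset.range (m+1),
        (if qp q ((n:ℝ)*b) < Y then qp q ((n:ℝ)*a) else 0) = 0 := by
      intro n hn
      rw [Finset.mem_range, Nat.lt_succ_iff] at hn
      rw [if_neg]
      intro hc
      exact hn (hlem n hc)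
    calc ∑' n : ℕ, (if qp q ((n:ℝ)*b) < Y then qp q ((n:ℝ)*a) else 0)
        = ∑ n ∈ Finset.range (m+1), (if qp q ((n:ℝ)*b) < Y then qp q ((n:ℝ)*a) else 0) :=
          tsum_eq_sum hzero
      _ ≤ ∑ n ∈ Finset.range (m+1), qp q ((n:ℝ)*a) := by
          refine Finset.sum_le_sum (fun n _ => ?_)
          split_ifs
          · exact le_rfl
          · exact zero_le
      _ = ∑ j ∈ Finset.range (m+1), qp q (((m - j : ℕ):ℝ)*a) := by
          have h := Finset.sum_range_reflect (fun n => qp q ((n:ℝ)*a)) (m+1)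
          simp only [Nat.add_sub_cancel] at h
          exact h.symm
      _ ≤ qp q ((m:ℝ)*a) * (1 - qp q (-a))⁻¹ := by
          have hterm : ∀ j ∈ Finset.range (m+1),
              qp q (((m - j : ℕ):ℝ)*a) = qp q ((m:ℝ)*a) * (qp q (-a))^j := by
            intro j hj
            rw [Finset.mem_range, Nat.lt_succ_iff] at hj
            rw [qp_pow_nat, ← qp_add hq]
            congr 1
            rw [Nat.cast_sub hj]
            ring
          rw [Finset.sum_congr rfl hterm, ← Finset.mul_sum]
          refine mul_le_mul_right ?_ _
          calc ∑ j ∈ Finset.range (m+1), (qp q (-a))^j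
              ≤ ∑' j : ℕ, (qp q (-a))^j := ENNReal.sum_le_tsum _
            _ = (1 - qp q (-a))⁻¹ := ENNReal.tsum_geometric _
      _ ≤ (1 - qp q (-a))⁻¹ * Y ^ (a/b) := by
          rw [mul_comm]
          refine mul_le_mul_right ?_ _
          have h1 : qp q ((m:ℝ)*a) = (qp q ((m:ℝ)*b)) ^ (a/b) := by
            rw [qp_rpow]
            congr 1
            field_simp
          rw [h1]
          exact ENNReal.rpow_le_rpow (le_of_lt hmS) (by positivity)
  · -- empty: all terms vanish
    have : ∀ n : ℕ, (if qp q ((n:ℝ)*b) < Y then qp q ((n:ℝ)*a) else 0) = 0 := by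
      intro n
      rw [if_neg]
      intro hc
      exact hne ⟨n, hc⟩
    rw [tsum_congr this]
    simp

end HomTree




namespace HomTree

/-- For `1 < p < 2` and `z = α + iδ_{p′}`, `‖P_z F‖_{L^{p′,∞}(𝔛)} ≤ C_p ‖F‖_{L^{p′}(Ω,ν)}`. -/
theorem statement8 {q : ℕ} (hq : 2 ≤ q) (T : HomTree q) (ν : Measure T.Boundary)
    [IsProbabilityMeasure ν]
    (hν : ∀ x : T.X, x ≠ T.o →
      ν (T.E x) = (q : ℝ≥0∞) / (((q : ℝ≥0∞) + 1) * (q : ℝ≥0∞) ^ T.nrm x))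
    (p p' : ℝ) (hp : 1 < p) (hp2 : p < 2) (hconj : 1 / p + 1 / p' = 1)
    (z : ℂ) (hz : z.im = 1 / p' - 1 / 2) :
    ∃ C : ℝ≥0∞, 0 < C ∧ C < ⊤ ∧ ∀ F : T.Boundary → ℂ, MemLp F (ENNReal.ofReal p') ν →
      weakN p' (T.ptrans ν z F) ≤ C * eLpNorm F (ENNReal.ofReal p') ν := by
  classical
  haveI := T.countable_X
  -- real exponent bookkeeping
  have hp0 : (0:ℝ) < p := by linarith
  have hpa : (1:ℝ)/2 < 1/p := by
    rw [div_lt_div_iff₀ (by norm_num : (0:ℝ) < 2) hp0]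
    linarith
  have hpb : 1/p < 1 := by rw [div_lt_one hp0]; exact hp
  set b : ℝ := 1/p' with hbdef
  have hbval : b = 1 - 1/p := by rw [hbdef]; linarith
  have hb0 : 0 < b := by rw [hbval]; linarith
  have hbhalf : b < 1/2 := by rw [hbval]; linarith
  set a : ℝ := 1 - b with hadef
  have ha_half : 1/2 < a := by rw [hadef]; linarith
  have ha1 : a < 1 := by rw [hadef]; linarith
  have ha0 : 0 < a := by linarith
  have hp'pos : 0 < p' := one_div_pos.mp (hbdef ▸ hb0)
  have hp'b : p' * b = 1 := by rw [hbdef]; field_simp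
  have habnn : 0 ≤ a/b := le_of_lt (div_pos ha0 hb0)
  have hp'ab : p' = 1 + a/b := by
    have hbne : b ≠ 0 := ne_of_gt hb0
    rw [hadef]
    field_simp
    nlinarith [hp'b]
  have hrea : ((1:ℂ)/2 + I*z).re = a := by
    have h1 : ((1:ℂ)/2 + I*z).re = 1/2 - z.im := by
      simp [Complex.add_re, Complex.mul_re]
      ring
    rw [h1, hz, hadef, hbdef]
    ring
  -- constants
  set c₀ : ℝ≥0∞ := (1 - qp q (-(2*a-1)))⁻¹ with hc₀def
  set c₁ : ℝ≥0∞ := (1 - qp q (-a))⁻¹ with hc₁def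
  have hr₀ : qp q (-(2*a-1)) < 1 := qp_lt_one hq (by linarith)
  have hr₁ : qp q (-a) < 1 := qp_lt_one hq (by linarith)
  have hc₀top : c₀ ≠ ⊤ := by
    rw [hc₀def, ne_eq, ENNReal.inv_eq_top, tsub_eq_zero_iff_le]
    exact not_le.mpr hr₀
  have hc₀0 : c₀ ≠ 0 := by
    rw [hc₀def, ne_eq, ENNReal.inv_eq_zero]
    exact ne_top_of_le_ne_top ENNReal.one_ne_top tsub_le_self
  have hc₁top : c₁ ≠ ⊤ := by
    rw [hc₁def, ne_eq, ENNReal.inv_eq_top, tsub_eq_zero_iff_le]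
    exact not_le.mpr hr₁
  have hc₁0 : c₁ ≠ 0 := by
    rw [hc₁def, ne_eq, ENNReal.inv_eq_zero]
    exact ne_top_of_le_ne_top ENNReal.one_ne_top tsub_le_self
  set K : ℝ≥0∞ := 4 * c₀ * c₁ * (2*c₀)^(a/b) with hKdef
  have h2c₀0 : (2*c₀ : ℝ≥0∞) ≠ 0 := mul_ne_zero (by norm_num) hc₀0
  have h2c₀top : (2*c₀ : ℝ≥0∞) ≠ ⊤ := ENNReal.mul_ne_top (by norm_num) hc₀top
  have hK0 : K ≠ 0 := by
    rw [hKdef]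
    refine mul_ne_zero (mul_ne_zero (mul_ne_zero (by norm_num) hc₀0) hc₁0) ?_
    exact ne_of_gt (ENNReal.rpow_pos (pos_iff_ne_zero.mpr h2c₀0) h2c₀top)
  have hKtop : K ≠ ⊤ := by
    rw [hKdef]
    refine ENNReal.mul_ne_top (ENNReal.mul_ne_top (ENNReal.mul_ne_top (by norm_num) hc₀top)
      hc₁top) ?_
    exact (ENNReal.rpow_lt_top_of_nonneg habnn h2c₀top).ne
  refine ⟨K ^ b, ENNReal.rpow_pos (pos_iff_ne_zero.mpr hK0) hKtop,
    ENNReal.rpow_lt_top_of_nonneg (le_of_lt hb0) hKtop, ?_⟩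
  intro F hF
  set g : T.Boundary → ℝ≥0∞ := fun ω => (‖F ω‖₊ : ℝ≥0∞) with hgdef
  have hgmeas : AEMeasurable g ν := hF.1.enorm
  have hgtop : ∀ ω, g ω ≠ ⊤ := fun ω => ENNReal.coe_ne_top
  set N : ℝ≥0∞ := ∫⁻ ω, (g ω) ^ p' ∂ν with hNdef
  have heLp : eLpNorm F (ENNReal.ofReal p') ν = N ^ b := by
    rw [eLpNorm_eq_lintegral_rpow_enorm_toReal (by rw [ne_eq, ENNReal.ofReal_eq_zero]; linarith)
      ENNReal.ofReal_ne_top, ENNReal.toReal_ofReal (le_of_lt hp'pos)]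
    rfl
  -- MAIN BOUND
  have main : ∀ t : ℝ, 0 < t →
      (ENNReal.ofReal t) ^ p' *
        Measure.count {x : T.X | t < ‖T.ptrans ν z F x‖} ≤ K * N := by
    intro t ht
    set Tt : ℝ≥0∞ := ENNReal.ofReal t with hTtdef
    have hTt0 : Tt ≠ 0 := by
      rw [hTtdef, ne_eq, ENNReal.ofReal_eq_zero]
      linarith
    have hTttop : Tt ≠ ⊤ := ENNReal.ofReal_ne_top
    have hTinv0 : Tt⁻¹ ≠ 0 := ENNReal.inv_ne_zero.mpr hTttop
    have hTinvtop : Tt⁻¹ ≠ ⊤ := ENNReal.inv_ne_top.mpr hTt0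
    set lam : ℕ → ℝ≥0∞ := fun n => Tt * qp q ((n:ℝ)*b) * c₀⁻¹ with hlamdef
    have hlam0 : ∀ n, lam n ≠ 0 := fun n =>
      mul_ne_zero (mul_ne_zero hTt0 (qp_ne_zero hq _)) (ENNReal.inv_ne_zero.mpr hc₀top)
    have hlamtop : ∀ n, lam n ≠ ⊤ := fun n =>
      ENNReal.mul_ne_top (ENNReal.mul_ne_top hTttop (qp_ne_top hq _))
        (ENNReal.inv_ne_top.mpr hc₀0)
    --每 bad vertex has a bad ancestor
    have hbadx : ∀ x : T.X, t < ‖T.ptrans ν z F x‖ →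
        T.E x ⊆ T.OmS ν g (lam (T.nrm x)) := by
      intro x hx
      have hex : ∃ w : T.X, (T.nrm w + T.G.dist w x = T.nrm x) ∧
          w ∈ T.badV ν g (lam (T.nrm x)) := by
        by_contra hcon
        push_neg at hcon
        have hnb : ∀ w : T.X, T.nrm w + T.G.dist w x = T.nrm x →
            ∫⁻ ω in T.E w, g ω ∂ν ≤ lam (T.nrm x) * ν (T.E w) := by
          intro w hw
          have := hcon w hw
          rw [badV, Set.mem_setOf_eq, not_lt] at this
          exact this
        have hle := T.enorm_le_of_no_bad hq ν hν z a hrea ha_half ha1 F hgmeas x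
          (lam (T.nrm x)) hnb
        have hc : lam (T.nrm x) * (1 - qp q (-(2*a-1)))⁻¹ * qp q (-(T.nrm x:ℝ)*(1-a)) = Tt := by
          rw [hlamdef]
          have h1a : (1:ℝ) - a = b := by rw [hadef]; ring
          rw [h1a]
          rw [show Tt * qp q ((T.nrm x:ℝ)*b) * c₀⁻¹ * (1 - qp q (-(2*a-1)))⁻¹ *
              qp q (-(T.nrm x:ℝ)*b)
            = Tt * (qp q ((T.nrm x:ℝ)*b) * qp q (-(T.nrm x:ℝ)*b)) * (c₀⁻¹ * c₀) by
              rw [hc₀def]; ring]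
          rw [← qp_add hq, ENNReal.inv_mul_cancel hc₀0 hc₀top]
          rw [show ((T.nrm x:ℝ)*b + -(T.nrm x:ℝ)*b) = 0 by ring, qp_zero]
          simp
        rw [hc] at hle
        have hlt : Tt < (‖T.ptrans ν z F x‖₊ : ℝ≥0∞) := by
          rw [hTtdef, show (‖T.ptrans ν z F x‖₊ : ℝ≥0∞) = ENNReal.ofReal ‖T.ptrans ν z F x‖ from
            (ofReal_norm _).symm]
          rw [ENNReal.ofReal_lt_ofReal_iff (by
            linarith)]
          exact hx
        exact absurd hle (not_le.mpr hlt)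
      obtain ⟨w, hwanc, hwbad⟩ := hex
      exact Set.Subset.trans (T.E_subset hwanc) (Set.subset_biUnion_of_mem hwbad)
    -- truncated parts
    set bign : ℕ → T.Boundary → ℝ≥0∞ :=
      fun n ω => if lam n < 2 * g ω then g ω else 0 with hbigndef
    have hbignmeas : ∀ n, AEMeasurable (bign n) ν := by
      intro n
      have hφ : Measurable (fun y : ℝ≥0∞ => if lam n < 2 * y then y else 0) := by
        apply Measurable.ite _ measurable_id measurable_const
        exact (measurable_const.mul measurable_id) measurableSet_Ioi
      exact hφ.comp_aemeasurable hgmeas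
    -- level sets
    set Sn : ℕ → Set T.X :=
      fun n => {x | T.nrm x = n ∧ t < ‖T.ptrans ν z F x‖} with hSndef
    have hsplit : {x : T.X | t < ‖T.ptrans ν z F x‖} = ⋃ n : ℕ, Sn n := by
      ext x
      simp only [Set.mem_setOf_eq, Set.mem_iUnion, hSndef]
      constructor
      · intro hx; exact ⟨T.nrm x, rfl, hx⟩
      · rintro ⟨n, _, hx⟩; exact hx
    have hdisjS : Pairwise (Function.onFun Disjoint Sn) := by
      intro m n hne
      rw [Function.onFun, Set.disjoint_left]
      rintro x ⟨hm, _⟩ ⟨hn, _⟩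
      exact hne (hm ▸ hn)
    -- per-level bound
    have keyn : ∀ n : ℕ, Measure.count (Sn n) ≤
        (4 * c₀ * Tt⁻¹) * (qp q ((n:ℝ)*a) * ∫⁻ ω, bign n ω ∂ν) := by
      intro n
      have hcnt : Measure.count (Sn n) ≤ 2 * qp q (n:ℝ) * ν (T.OmS ν g (lam n)) := by
        refine T.count_level_le hq ν hν n (Sn n) (fun x hx => hx.1) _ ?_
        intro x hx
        have := hbadx x hx.2
        rw [hx.1] at this
        exact this
      have hOm : ν (T.OmS ν g (lam n)) ≤ (lam n)⁻¹ * (2 * ∫⁻ ω, bign n ω ∂ν) := by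
        have h := T.nu_OmS_le ν g hgmeas (lam n) (hlam0 n) (hlamtop n)
        calc ν (T.OmS ν g (lam n)) = (lam n)⁻¹ * (lam n * ν (T.OmS ν g (lam n))) := by
              rw [← mul_assoc, ENNReal.inv_mul_cancel (hlam0 n) (hlamtop n), one_mul]
          _ ≤ (lam n)⁻¹ * (2 * ∫⁻ ω, bign n ω ∂ν) := mul_le_mul_right h _
      have hlaminv : (lam n)⁻¹ = Tt⁻¹ * qp q (-(n:ℝ)*b) * c₀ := by
        rw [hlamdef]
        rw [ENNReal.mul_inv (Or.inl (mul_ne_zero hTt0 (qp_ne_zero hq _)))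
          (Or.inl (ENNReal.mul_ne_top hTttop (qp_ne_top hq _)))]
        rw [ENNReal.mul_inv (Or.inl hTt0) (Or.inl hTttop), inv_inv]
        rw [show (-(n:ℝ)*b) = -((n:ℝ)*b) by ring, qp_neg]
      calc Measure.count (Sn n) ≤ 2 * qp q (n:ℝ) * ν (T.OmS ν g (lam n)) := hcnt
        _ ≤ 2 * qp q (n:ℝ) * ((lam n)⁻¹ * (2 * ∫⁻ ω, bign n ω ∂ν)) :=
            mul_le_mul_right hOm _
        _ = (4 * c₀ * Tt⁻¹) * ((qp q (n:ℝ) * qp q (-(n:ℝ)*b)) * ∫⁻ ω, bign n ω ∂ν) := by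
            rw [hlaminv]; ring
        _ = (4 * c₀ * Tt⁻¹) * (qp q ((n:ℝ)*a) * ∫⁻ ω, bign n ω ∂ν) := by
            rw [← qp_add hq]
            congr 3
            rw [hadef]; ring
    -- sum over levels and exchange
    have hswap : ∑' n : ℕ, qp q ((n:ℝ)*a) * ∫⁻ ω, bign n ω ∂ν
        = ∫⁻ ω, ∑' n : ℕ, qp q ((n:ℝ)*a) * bign n ω ∂ν := by
      have h1 : ∀ n : ℕ, qp q ((n:ℝ)*a) * ∫⁻ ω, bign n ω ∂ν
          = ∫⁻ ω, qp q ((n:ℝ)*a) * bign n ω ∂ν :=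
        fun n => (lintegral_const_mul'' _ (hbignmeas n)).symm
      rw [tsum_congr h1, lintegral_tsum (fun n => (hbignmeas n).const_mul _)]
    -- pointwise geometric estimate
    have hptw : ∀ ω, ∑' n : ℕ, qp q ((n:ℝ)*a) * bign n ω
        ≤ c₁ * (2*c₀*Tt⁻¹)^(a/b) * (g ω) ^ p' := by
      intro ω
      set Y : ℝ≥0∞ := (2*c₀*Tt⁻¹) * g ω with hYdef
      have hYtop : Y ≠ ⊤ := ENNReal.mul_ne_top (ENNReal.mul_ne_top h2c₀top hTinvtop) (hgtop ω)
      have hterm : ∀ n : ℕ, qp q ((n:ℝ)*a) * bign n ω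
          ≤ (if qp q ((n:ℝ)*b) < Y then qp q ((n:ℝ)*a) else 0) * g ω := by
        intro n
        by_cases hcase : lam n < 2 * g ω
        · have hY : qp q ((n:ℝ)*b) < Y := by
            have h2 := ENNReal.mul_lt_mul_left (a := c₀ * Tt⁻¹)
              (mul_ne_zero hc₀0 hTinv0) (ENNReal.mul_ne_top hc₀top hTinvtop) hcase
            have hL : lam n * (c₀ * Tt⁻¹) = qp q ((n:ℝ)*b) := by
              rw [hlamdef]
              rw [show Tt * qp q ((n:ℝ)*b) * c₀⁻¹ * (c₀ * Tt⁻¹)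
                = qp q ((n:ℝ)*b) * (Tt * Tt⁻¹) * (c₀⁻¹ * c₀) by ring]
              rw [ENNReal.mul_inv_cancel hTt0 hTttop,
                ENNReal.inv_mul_cancel hc₀0 hc₀top]
              simp
            have hR : 2 * g ω * (c₀ * Tt⁻¹) = Y := by rw [hYdef]; ring
            rw [hL, hR] at h2
            exact h2
          rw [hbigndef]
          simp only [if_pos hcase, if_pos hY]
          exact le_rfl
        · rw [hbigndef]
          simp only [if_neg hcase, mul_zero]
          exact zero_le
      calc ∑' n : ℕ, qp q ((n:ℝ)*a) * bign n ω
          ≤ ∑' n : ℕ, (if qp q ((n:ℝ)*b) < Y then qp q ((n:ℝ)*a) else 0) * g ω :=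
            ENNReal.tsum_le_tsum hterm
        _ = (∑' n : ℕ, (if qp q ((n:ℝ)*b) < Y then qp q ((n:ℝ)*a) else 0)) * g ω :=
            ENNReal.tsum_mul_right
        _ ≤ ((1 - qp q (-a))⁻¹ * Y ^ (a/b)) * g ω :=
            mul_le_mul_left (geom_tail hq ha0 hb0 Y hYtop) _
        _ = c₁ * (2*c₀*Tt⁻¹)^(a/b) * (g ω) ^ p' := by
            have hgp : (g ω) ^ p' = (g ω)^(a/b) * g ω := by
              rw [show p' = a/b + 1 by rw [hp'ab]; ring,
                ENNReal.rpow_add_of_nonneg _ _ habnn (by norm_num : (0:ℝ) ≤ 1),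
                ENNReal.rpow_one]
            rw [← hc₁def, hYdef, ENNReal.mul_rpow_of_nonneg _ _ habnn, hgp]
            ring
      -- end hptw
    -- combine
    have hcount : Measure.count {x : T.X | t < ‖T.ptrans ν z F x‖}
        ≤ (4 * c₀ * Tt⁻¹) * (c₁ * (2*c₀*Tt⁻¹)^(a/b) * N) := by
      calc Measure.count {x : T.X | t < ‖T.ptrans ν z F x‖}
          = ∑' n : ℕ, Measure.count (Sn n) := by
            rw [hsplit, measure_iUnion hdisjS (fun n => MeasurableSpace.measurableSet_top)]
        _ ≤ ∑' n : ℕ, (4 * c₀ * Tt⁻¹) * (qp q ((n:ℝ)*a) * ∫⁻ ω, bign n ω ∂ν) :=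
            ENNReal.tsum_le_tsum keyn
        _ = (4 * c₀ * Tt⁻¹) * ∑' n : ℕ, qp q ((n:ℝ)*a) * ∫⁻ ω, bign n ω ∂ν :=
            ENNReal.tsum_mul_left
        _ = (4 * c₀ * Tt⁻¹) * ∫⁻ ω, ∑' n : ℕ, qp q ((n:ℝ)*a) * bign n ω ∂ν := by
            rw [hswap]
        _ ≤ (4 * c₀ * Tt⁻¹) * ∫⁻ ω, c₁ * (2*c₀*Tt⁻¹)^(a/b) * (g ω) ^ p' ∂ν :=
            mul_le_mul_right (lintegral_mono hptw) _
        _ = (4 * c₀ * Tt⁻¹) * (c₁ * (2*c₀*Tt⁻¹)^(a/b) * N) := by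
            rw [hNdef, lintegral_const_mul'' _ (hgmeas.pow_const p')]
    -- rearrange powers of Tt
    have hrear : (4 * c₀ * Tt⁻¹) * (c₁ * (2*c₀*Tt⁻¹)^(a/b) * N)
        = K * ((Tt ^ p')⁻¹ * N) := by
      rw [show (2*c₀*Tt⁻¹ : ℝ≥0∞) = (2*c₀) * Tt⁻¹ by ring]
      rw [ENNReal.mul_rpow_of_nonneg _ _ habnn]
      rw [hKdef]
      rw [show (4 * c₀ * Tt⁻¹) * (c₁ * ((2*c₀)^(a/b) * (Tt⁻¹)^(a/b)) * N)
        = (4 * c₀ * c₁ * (2*c₀)^(a/b)) * ((Tt⁻¹ * (Tt⁻¹)^(a/b)) * N) by ring]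
      congr 2
      have h2 : (Tt ^ p')⁻¹ = Tt⁻¹ * (Tt⁻¹)^(a/b) := by
        rw [← ENNReal.inv_rpow, show p' = 1 + a/b from hp'ab,
          ENNReal.rpow_add_of_nonneg _ _ (by norm_num : (0:ℝ) ≤ 1) habnn,
          ENNReal.rpow_one]
      exact h2.symm
    rw [hrear] at hcount
    calc Tt ^ p' * Measure.count {x : T.X | t < ‖T.ptrans ν z F x‖}
        ≤ Tt ^ p' * (K * ((Tt ^ p')⁻¹ * N)) := mul_le_mul_right hcount _
      _ = (Tt ^ p' * (Tt ^ p')⁻¹) * (K * N) := by ring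
      _ = K * N := by
          rw [ENNReal.mul_inv_cancel (by
              simp only [ne_eq, ENNReal.rpow_eq_zero_iff, not_or, not_and, not_lt]
              constructor
              · intro h; exact absurd h hTt0
              · intro h; exact absurd h hTttop) (by
              simp only [ne_eq, ENNReal.rpow_eq_top_iff, not_or, not_and, not_lt]
              constructor
              · intro h; exact absurd h hTt0
              · intro h; exact absurd h hTttop), one_mul]
  -- conclude
  rw [weakN]
  refine iSup_le (fun t => ?_)
  rcases le_or_gt t 0 with hle | hlt
  · rw [ENNReal.ofReal_of_nonpos hle, zero_mul]
    exact zero_le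
  · have hm := main t hlt
    have hTt0 : ENNReal.ofReal t ≠ 0 := by
      rw [ne_eq, ENNReal.ofReal_eq_zero]; linarith
    have hTttop : (ENNReal.ofReal t : ℝ≥0∞) ≠ ⊤ := ENNReal.ofReal_ne_top
    have hTp' : ((ENNReal.ofReal t) ^ p') ^ b = ENNReal.ofReal t := by
      rw [← ENNReal.rpow_mul, hp'b, ENNReal.rpow_one]
    calc ENNReal.ofReal t *
          (Measure.count {y : T.X | t < ‖T.ptrans ν z F y‖}) ^ (1/p')
        = ((ENNReal.ofReal t) ^ p' *
            Measure.count {y : T.X | t < ‖T.ptrans ν z F y‖}) ^ b := by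
          rw [ENNReal.mul_rpow_of_nonneg _ _ (le_of_lt hb0), hTp', hbdef]
      _ ≤ (K * N) ^ b := ENNReal.rpow_le_rpow hm (le_of_lt hb0)
      _ = K ^ b * N ^ b := ENNReal.mul_rpow_of_nonneg _ _ (le_of_lt hb0)
      _ = K ^ b * eLpNorm F (ENNReal.ofReal p') ν := by rw [heLp]


end HomTree
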